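/- arXiv:1108.4087 — 3 statements merged into one kernel-verified Lean document; each statement's English description precedes it below -/
import Mathlib

section
/- If f∈H_σ(φ) (f bi-univalent with f'≺φ and (f⁻¹)'≺φ, φ(z)=1+B₁z+B₂z²+⋯, B₁>0), then |a₃| ≤ (1/3 + B₁/4)·B₁. -/
open Metric Complex Filter Topology

/-!
Differentiating `f' = φ ∘ u` and `g' = φ ∘ v` at `0` expresses the Taylor coefficients of `f` and
of its inverse `g` through those of `φ`, `u` and `v`; the inverse-series relations
`g''(0) = -f''(0)` and `g'''(0) = 3 f''(0)² - f'''(0)` then force `v'(0) = -u'(0)` and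
`a₃ = B₁² u₁² / 4 + B₁ (u₂ - v₂) / 6`. Cauchy's estimate bounds every Taylor coefficient of a
self-map of the unit disc by `1`.
-/

/-- n-th Taylor coefficient of `f` at `0`. -/
noncomputable def tc (f : ℂ → ℂ) (n : ℕ) : ℂ := iteratedDeriv n f 0 / n.factorial

section ChainRule

variable {𝕜 : Type*} [NontriviallyNormedField 𝕜] {f g p q : 𝕜 → 𝕜} {x : 𝕜}

lemma iteratedDeriv_succ_eq_of_deriv_eventuallyEq (n : ℕ) (h : deriv f =ᶠ[𝓝 x] g) :
    iteratedDeriv (n + 1) f x = iteratedDeriv n g x := by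
  rw [iteratedDeriv_succ']
  exact h.iteratedDeriv_eq n

lemma iteratedDeriv_two_eq_of_deriv_eventuallyEq_comp (hp : DifferentiableAt 𝕜 p (q x))
    (hq : DifferentiableAt 𝕜 q x) (h : deriv f =ᶠ[𝓝 x] p ∘ q) :
    iteratedDeriv 2 f x = deriv p (q x) * deriv q x := by
  rw [iteratedDeriv_succ_eq_of_deriv_eventuallyEq 1 h, iteratedDeriv_one, deriv_comp x hp hq]

lemma deriv_eq_one_of_comp_eventuallyEq_id (hg : DifferentiableAt 𝕜 g (f x))
    (hf : DifferentiableAt 𝕜 f x) (hgf : g ∘ f =ᶠ[𝓝 x] id) (hf1 : deriv f x = 1) :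
    deriv g (f x) = 1 := by
  have h := hgf.deriv_eq
  rwa [deriv_comp x hg hf, hf1, mul_one, deriv_id] at h

variable [CompleteSpace 𝕜]

lemma AnalyticAt.deriv_comp_eventuallyEq (hp : AnalyticAt 𝕜 p (q x)) (hq : AnalyticAt 𝕜 q x) :
    deriv (p ∘ q) =ᶠ[𝓝 x] (deriv p ∘ q) * deriv q := by
  filter_upwards [hq.eventually_analyticAt, hq.continuousAt.eventually hp.eventually_analyticAt]
    with z hqz hpz
  exact deriv_comp z hpz.differentiableAt hqz.differentiableAt

lemma AnalyticAt.iteratedDeriv_two_comp (hp : AnalyticAt 𝕜 p (q x)) (hq : AnalyticAt 𝕜 q x) :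
    iteratedDeriv 2 (p ∘ q) x =
      iteratedDeriv 2 p (q x) * deriv q x ^ 2 + deriv p (q x) * iteratedDeriv 2 q x := by
  rw [iteratedDeriv_succ_eq_of_deriv_eventuallyEq 1 (hp.deriv_comp_eventuallyEq hq),
    iteratedDeriv_mul (hp.deriv.comp_of_eq hq rfl).contDiffAt hq.deriv.contDiffAt]
  simp only [Finset.sum_range_succ, Finset.sum_range_zero, Nat.choose_zero_right,
    Nat.choose_self, iteratedDeriv_zero, Function.comp_apply,
    deriv_comp x hp.deriv.differentiableAt hq.differentiableAt, iteratedDeriv_succ]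
  norm_num
  ring

lemma AnalyticAt.iteratedDeriv_three_comp (hp : AnalyticAt 𝕜 p (q x)) (hq : AnalyticAt 𝕜 q x) :
    iteratedDeriv 3 (p ∘ q) x =
      iteratedDeriv 3 p (q x) * deriv q x ^ 3
        + 3 * iteratedDeriv 2 p (q x) * deriv q x * iteratedDeriv 2 q x
        + deriv p (q x) * iteratedDeriv 3 q x := by
  rw [iteratedDeriv_succ_eq_of_deriv_eventuallyEq 2 (hp.deriv_comp_eventuallyEq hq),
    iteratedDeriv_mul (hp.deriv.comp_of_eq hq rfl).contDiffAt hq.deriv.contDiffAt]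
  simp only [Finset.sum_range_succ, Finset.sum_range_zero, Nat.choose_zero_right,
    Nat.choose_self, iteratedDeriv_zero, Function.comp_apply,
    deriv_comp x hp.deriv.differentiableAt hq.differentiableAt, hp.deriv.iteratedDeriv_two_comp hq,
    ← iteratedDeriv_succ', iteratedDeriv_succ]
  norm_num
  ring

lemma iteratedDeriv_three_eq_of_deriv_eventuallyEq_comp (hp : AnalyticAt 𝕜 p (q x))
    (hq : AnalyticAt 𝕜 q x) (h : deriv f =ᶠ[𝓝 x] p ∘ q) :
    iteratedDeriv 3 f x =
      iteratedDeriv 2 p (q x) * deriv q x ^ 2 + deriv p (q x) * iteratedDeriv 2 q x := by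
  rw [iteratedDeriv_succ_eq_of_deriv_eventuallyEq 2 h, hp.iteratedDeriv_two_comp hq]

section LeftInverse

variable (hg : AnalyticAt 𝕜 g (f x)) (hf : AnalyticAt 𝕜 f x) (hgf : g ∘ f =ᶠ[𝓝 x] id)
  (hf1 : deriv f x = 1)
include hg hf hgf hf1

lemma iteratedDeriv_two_eq_neg_of_comp_eventuallyEq_id :
    iteratedDeriv 2 g (f x) = -iteratedDeriv 2 f x := by
  have h := hgf.iteratedDeriv_eq 2
  rw [hg.iteratedDeriv_two_comp hf, hf1,
    deriv_eq_one_of_comp_eventuallyEq_id hg.differentiableAt hf.differentiableAt hgf hf1] at h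
  norm_num [iteratedDeriv_id] at h
  linear_combination h

lemma iteratedDeriv_three_eq_of_comp_eventuallyEq_id :
    iteratedDeriv 3 g (f x) = 3 * iteratedDeriv 2 f x ^ 2 - iteratedDeriv 3 f x := by
  have h := hgf.iteratedDeriv_eq 3
  rw [hg.iteratedDeriv_three_comp hf, hf1,
    deriv_eq_one_of_comp_eventuallyEq_id hg.differentiableAt hf.differentiableAt hgf hf1,
    iteratedDeriv_two_eq_neg_of_comp_eventuallyEq_id hg hf hgf hf1] at h
  norm_num [iteratedDeriv_id] at h
  linear_combination h

end LeftInverse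

end ChainRule

section CauchyEstimate

variable {F : Type*} [NormedAddCommGroup F] [NormedSpace ℂ F] [CompleteSpace F]

lemma Complex.norm_iteratedDeriv_le_of_forall_mem_ball_norm_le {f : ℂ → F} {c : ℂ} {R C : ℝ}
    (n : ℕ) (hR : 0 < R) (hf : DifferentiableOn ℂ f (ball c R))
    (hC : ∀ z ∈ ball c R, ‖f z‖ ≤ C) :
    ‖iteratedDeriv n f c‖ ≤ n.factorial * C / R ^ n := by
  have hlim : Tendsto (fun r : ℝ => n.factorial * C / r ^ n) (𝓝[<] R)
      (𝓝 (n.factorial * C / R ^ n)) :=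
    (continuousAt_const.div (continuous_pow n).continuousAt
      (pow_ne_zero n hR.ne')).tendsto.mono_left nhdsWithin_le_nhds
  refine ge_of_tendsto hlim ?_
  filter_upwards [Ioo_mem_nhdsLT hR] with r ⟨hr0, hrR⟩
  refine norm_iteratedDeriv_le_of_forall_mem_sphere_norm_le n hr0
    (hf.diffContOnCl_ball (closedBall_subset_ball hrR)) fun z hz => hC z ?_
  exact sphere_subset_closedBall.trans (closedBall_subset_ball hrR) hz

end CauchyEstimate

lemma norm_tc_le_one_of_mapsTo_ball {h : ℂ → ℂ} (hh : DifferentiableOn ℂ h (ball 0 1))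
    (hmap : Set.MapsTo h (ball 0 1) (ball 0 1)) (n : ℕ) : ‖tc h n‖ ≤ 1 := by
  have hle := norm_iteratedDeriv_le_of_forall_mem_ball_norm_le n one_pos hh
    fun z hz => (mem_ball_zero_iff.1 (hmap hz)).le
  rw [mul_one, one_pow, div_one] at hle
  rw [tc, norm_div, Complex.norm_natCast]
  exact div_le_one_of_le₀ hle (Nat.cast_nonneg _)

lemma tc_three_eq_of_biSubordinate {f g u v φ : ℂ → ℂ} (hf : AnalyticAt ℂ f 0)
    (hg : AnalyticAt ℂ g 0) (hu : AnalyticAt ℂ u 0) (hv : AnalyticAt ℂ v 0)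
    (hφ : AnalyticAt ℂ φ 0) (hf0 : f 0 = 0) (hf1 : deriv f 0 = 1) (hgf : g ∘ f =ᶠ[𝓝 0] id)
    (hu0 : u 0 = 0) (hv0 : v 0 = 0) (hfu : deriv f =ᶠ[𝓝 0] φ ∘ u)
    (hgv : deriv g =ᶠ[𝓝 0] φ ∘ v) (hφ1 : deriv φ 0 ≠ 0) :
    tc f 3 = tc φ 1 ^ 2 * tc u 1 ^ 2 / 4 + tc φ 1 * (tc u 2 - tc v 2) / 6 := by
  have hφu : AnalyticAt ℂ φ (u 0) := by rwa [hu0]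
  have hφv : AnalyticAt ℂ φ (v 0) := by rwa [hv0]
  have hgf0 : AnalyticAt ℂ g (f 0) := by rwa [hf0]
  have f2 := iteratedDeriv_two_eq_of_deriv_eventuallyEq_comp hφu.differentiableAt
    hu.differentiableAt hfu
  have g2 := iteratedDeriv_two_eq_of_deriv_eventuallyEq_comp hφv.differentiableAt
    hv.differentiableAt hgv
  have f3 := iteratedDeriv_three_eq_of_deriv_eventuallyEq_comp hφu hu hfu
  have g3 := iteratedDeriv_three_eq_of_deriv_eventuallyEq_comp hφv hv hgv
  have inv2 := iteratedDeriv_two_eq_neg_of_comp_eventuallyEq_id hgf0 hf hgf hf1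
  have inv3 := iteratedDeriv_three_eq_of_comp_eventuallyEq_id hgf0 hf hgf hf1
  rw [hu0] at f2 f3
  rw [hv0] at g2 g3
  rw [hf0] at inv2 inv3
  -- `v'(0) = -u'(0)` is what makes the `φ''(0)` terms of `f'''(0)` and `g'''(0)` cancel.
  have hv1 : deriv v 0 = -deriv u 0 :=
    mul_left_cancel₀ hφ1 (by linear_combination -g2 + inv2 - f2)
  simp only [tc, Nat.factorial, iteratedDeriv_one]
  push_cast
  linear_combination f3 / 12 - g3 / 12 + inv3 / 12
    + (iteratedDeriv 2 f 0 + deriv φ 0 * deriv u 0) / 4 * f2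
    + iteratedDeriv 2 φ 0 * (deriv u 0 - deriv v 0) / 12 * hv1

theorem stmt10_general (f g u v φ : ℂ → ℂ) (B₁ : ℝ)
    (hf : AnalyticOn ℂ f (ball (0:ℂ) 1))
    (hf0 : f 0 = 0) (hf1 : deriv f 0 = 1)
    (hg : AnalyticOn ℂ g (ball (0:ℂ) 1))
    (hinv : ∀ᶠ z in 𝓝 (0:ℂ), g (f z) = z)
    (hu : AnalyticOn ℂ u (ball (0:ℂ) 1)) (humap : ∀ z ∈ ball (0:ℂ) 1, u z ∈ ball (0:ℂ) 1) (hu0 : u 0 = 0)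
    (hv : AnalyticOn ℂ v (ball (0:ℂ) 1)) (hvmap : ∀ w ∈ ball (0:ℂ) 1, v w ∈ ball (0:ℂ) 1) (hv0 : v 0 = 0)
    (hφ : AnalyticOn ℂ φ (ball (0:ℂ) 1))
    (hB₁ : tc φ 1 = (B₁ : ℂ)) (hB₁pos : 0 < B₁)
    (hfu : ∀ z ∈ ball (0:ℂ) 1, deriv f z = φ (u z))
    (hgv : ∀ w ∈ ball (0:ℂ) 1, deriv g w = φ (v w)) :
    ‖tc f 3‖ ≤ (1 / 3 + B₁ / 4) * B₁ := by
  have hball : ball (0:ℂ) 1 ∈ 𝓝 0 := ball_mem_nhds 0 one_pos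
  have hφ1 : deriv φ 0 ≠ 0 := by
    have : deriv φ 0 = B₁ := by simpa [tc] using hB₁
    exact this ▸ ofReal_ne_zero.2 hB₁pos.ne'
  rw [tc_three_eq_of_biSubordinate (hf.analyticAt hball) (hg.analyticAt hball)
    (hu.analyticAt hball) (hv.analyticAt hball) (hφ.analyticAt hball) hf0 hf1 hinv hu0 hv0
    (eventually_of_mem hball hfu) (eventually_of_mem hball hgv) hφ1, hB₁]
  have hu1 := norm_tc_le_one_of_mapsTo_ball hu.differentiableOn humap 1
  have hu2 := norm_tc_le_one_of_mapsTo_ball hu.differentiableOn humap 2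
  have hv2 := norm_tc_le_one_of_mapsTo_ball hv.differentiableOn hvmap 2
  calc ‖(B₁:ℂ) ^ 2 * tc u 1 ^ 2 / 4 + B₁ * (tc u 2 - tc v 2) / 6‖
      ≤ B₁ ^ 2 * ‖tc u 1‖ ^ 2 / 4 + B₁ * (‖tc u 2‖ + ‖tc v 2‖) / 6 := by
        refine (norm_add_le _ _).trans ?_
        simp only [norm_div, norm_mul, norm_pow, norm_real, Real.norm_of_nonneg hB₁pos.le,
          RCLike.norm_ofNat]
        gcongr
        exact norm_sub_le _ _
    _ ≤ B₁ ^ 2 * 1 ^ 2 / 4 + B₁ * (1 + 1) / 6 := by gcongr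
    _ = (1 / 3 + B₁ / 4) * B₁ := by ring

theorem stmt10 (f g u v φ : ℂ → ℂ) (B₁ B₂ : ℝ)
    (hf : AnalyticOn ℂ f (ball (0:ℂ) 1)) (hfinj : Set.InjOn f (ball (0:ℂ) 1))
    (hf0 : f 0 = 0) (hf1 : deriv f 0 = 1)
    (hg : AnalyticOn ℂ g (ball (0:ℂ) 1)) (hginj : Set.InjOn g (ball (0:ℂ) 1))
    (hinv : ∀ᶠ z in 𝓝 (0:ℂ), g (f z) = z)
    (hu : AnalyticOn ℂ u (ball (0:ℂ) 1)) (humap : ∀ z ∈ ball (0:ℂ) 1, u z ∈ ball (0:ℂ) 1) (hu0 : u 0 = 0)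
    (hv : AnalyticOn ℂ v (ball (0:ℂ) 1)) (hvmap : ∀ w ∈ ball (0:ℂ) 1, v w ∈ ball (0:ℂ) 1) (hv0 : v 0 = 0)
    (hφ : AnalyticOn ℂ φ (ball (0:ℂ) 1)) (hφ0 : φ 0 = 1)
    (hB₁ : tc φ 1 = (B₁ : ℂ)) (hB₂ : tc φ 2 = (B₂ : ℂ)) (hB₁pos : 0 < B₁)
    (hfu : ∀ z ∈ ball (0:ℂ) 1, deriv f z = φ (u z))
    (hgv : ∀ w ∈ ball (0:ℂ) 1, deriv g w = φ (v w)) :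
    ‖tc f 3‖ ≤ (1 / 3 + B₁ / 4) * B₁ :=
  stmt10_general f g u v φ B₁ hf hf0 hf1 hg hinv hu humap hu0 hv hvmap hv0 hφ hB₁ hB₁pos hfu hgv
end

section
/- Let f be bi-univalent on 𝔻, f(z)=z+a₂z²+⋯, g=f⁻¹, α≥0, and suppose zf'(z)/f(z)+αz²f''(z)/f(z) ≺ φ(z) and wg'(w)/g(w)+αw²g''(w)/g(w) ≺ φ(w), where φ(z)=1+B₁z+B₂z²+⋯, B₁>0. Then, assuming B₁²(1+4α)+(B₁−B₂)(1+2α)²≠0, |a₂| ≤ B₁√B₁ / √|B₁²(1+4α)+(B₁−B₂)(1+2α)²|. -/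
open Metric Complex Filter Topology

/-!
Write `A = f''(0)`, `c₁ = u'(0)`, `c₂ = u''(0)` and `d₁, d₂` for `v`. Comparing the second and
third derivatives at `0` in `z f' + α z² f'' = (φ ∘ u) f`, and in the same identity for `g`, whose
derivatives `g''(0) = -A`, `g'''(0) = 3A² - f'''(0)` come from `g ∘ f = id`, gives
`(1 + 2α) A = 2 B₁ c₁ = -2 B₁ d₁` and, after eliminating `f'''(0)`,
`(B₁²(1 + 4α) - B₂(1 + 2α)²) A² = B₁³ (c₂ + d₂)`.
The Schwarz–Pick bound `|c₂| ≤ 2 (1 - |c₁|²)` (and the same for `d`), together with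
`4 B₁² |c₁|² = (1 + 2α)² |A|²`, turns this into `|A|² |B₁²(1+4α) + (B₁-B₂)(1+2α)²| ≤ 4 B₁³`.
-/

open Set ComplexConjugate

section

variable {𝕜 : Type*} [NontriviallyNormedField 𝕜]

theorem iteratedDeriv_iteratedDeriv (m n : ℕ) (f : 𝕜 → 𝕜) :
    iteratedDeriv m (iteratedDeriv n f) = iteratedDeriv (m + n) f := by
  simp only [iteratedDeriv_eq_iterate, Function.iterate_add_apply]

theorem iteratedDeriv_of_eventually_comp_eq {f g : 𝕜 → 𝕜} {x : 𝕜} (hf : ContDiffAt 𝕜 3 f x)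
    (hg : ContDiffAt 𝕜 3 g (f x)) (hf1 : deriv f x = 1) (hgf : ∀ᶠ z in 𝓝 x, g (f z) = z) :
    deriv g (f x) = 1 ∧ iteratedDeriv 2 g (f x) = -iteratedDeriv 2 f x ∧
      iteratedDeriv 3 g (f x) = 3 * iteratedDeriv 2 f x ^ 2 - iteratedDeriv 3 f x := by
  have hgf' : g ∘ f =ᶠ[𝓝 x] id := hgf
  have h1 : deriv g (f x) = 1 := by
    simpa [hf1, deriv_comp x (hg.differentiableAt (by norm_num))
      (hf.differentiableAt (by norm_num))] using hgf'.deriv_eq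
  have h2 := hgf'.iteratedDeriv_eq 2
  have h3 := hgf'.iteratedDeriv_eq 3
  rw [iteratedDeriv_comp_two (hg.of_le (by norm_num)) (hf.of_le (by norm_num))] at h2
  rw [iteratedDeriv_comp_three hg hf] at h3
  simp only [iteratedDeriv_id, hf1, h1] at h2 h3
  norm_num at h2 h3
  refine ⟨h1, by linear_combination h2, by linear_combination h3 - 3 * iteratedDeriv 2 f x * h2⟩

theorem eventuallyEq_mul_of_eventually_div_eq {f p w : 𝕜 → 𝕜} {f' x : 𝕜} (hf : HasDerivAt f f' x)
    (hf' : f' ≠ 0) (hfx : f x = 0) (hpx : p x = 0) (h : ∀ᶠ z in 𝓝[≠] x, p z / f z = w z) :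
    p =ᶠ[𝓝 x] fun z => w z * f z := by
  refine eventuallyEq_nhds_of_eventuallyEq_nhdsNE ?_ (by simp [hfx, hpx])
  filter_upwards [h, hf.eventually_ne hf' (c := 0)] with z hz hfz
  rw [← hz, div_mul_cancel₀ _ hfz]

variable [CompleteSpace 𝕜]

theorem coeff_relations_of_eventuallyEq {f u φ : 𝕜 → 𝕜} {α : 𝕜}
    (hf : AnalyticAt 𝕜 f 0) (hu : AnalyticAt 𝕜 u 0) (hφ : AnalyticAt 𝕜 φ (u 0))
    (hf0 : f 0 = 0) (hf1 : deriv f 0 = 1) (hφ0 : φ (u 0) = 1)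
    (h : (fun z => z * deriv f z + α * z ^ 2 * iteratedDeriv 2 f z) =ᶠ[𝓝 0]
      fun z => φ (u z) * f z) :
    (1 + 2 * α) * iteratedDeriv 2 f 0 = 2 * deriv φ (u 0) * deriv u 0 ∧
    (2 + 6 * α) * iteratedDeriv 3 f 0 = 3 * iteratedDeriv 2 φ (u 0) * deriv u 0 ^ 2
      + 3 * deriv φ (u 0) * iteratedDeriv 2 u 0
      + 3 * deriv φ (u 0) * deriv u 0 * iteratedDeriv 2 f 0 := by
  have hf' : AnalyticAt 𝕜 (iteratedDeriv 2 f) 0 := by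
    rw [iteratedDeriv_eq_iterate]; exact hf.iterated_deriv 2
  have hφu : AnalyticAt 𝕜 (φ ∘ u) 0 := hφ.comp hu
  have hsq : AnalyticAt 𝕜 (fun z => α * z ^ 2) 0 := by fun_prop
  have hderivs (n : ℕ) : iteratedDeriv n (fun z => z * deriv f z) 0
      + iteratedDeriv n (fun z => α * z ^ 2 * iteratedDeriv 2 f z) 0
      = iteratedDeriv n (fun z => (φ ∘ u) z * f z) 0 := by
    have h₁ : AnalyticAt 𝕜 (fun z => z * deriv f z) 0 := analyticAt_id.mul hf.deriv
    have h₂ : AnalyticAt 𝕜 (fun z => α * z ^ 2 * iteratedDeriv 2 f z) 0 := hsq.mul hf'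
    rw [← iteratedDeriv_fun_add h₁.contDiffAt h₂.contDiffAt]
    exact h.iteratedDeriv_eq n
  have leibniz₁ (n : ℕ) := iteratedDeriv_fun_mul (n := n) (x := (0 : 𝕜)) contDiffAt_fun_id
    hf.deriv.contDiffAt
  have leibniz₂ (n : ℕ) := iteratedDeriv_fun_mul (n := n) hsq.contDiffAt hf'.contDiffAt
  have leibniz₃ (n : ℕ) := iteratedDeriv_fun_mul (n := n) hφu.contDiffAt hf.contDiffAt
  have e2 := hderivs 2
  have e3 := hderivs 3
  simp only [leibniz₁, leibniz₂, leibniz₃, Finset.sum_range_succ, Finset.sum_range_zero] at e2 e3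
  simp only [iteratedDeriv_const_mul_field, iteratedDeriv_fun_pow_zero, iteratedDeriv_fun_id_zero,
    ← iteratedDeriv_succ', iteratedDeriv_iteratedDeriv,
    iteratedDeriv_comp_two hφ.contDiffAt hu.contDiffAt,
    iteratedDeriv_comp_three hφ.contDiffAt hu.contDiffAt] at e2 e3
  norm_num [hf0, hf1, hφ0] at e2 e3
  rw [deriv_comp (0 : 𝕜) hφ.differentiableAt hu.differentiableAt] at e2 e3
  exact ⟨by linear_combination e2, by linear_combination e3⟩

end

theorem coeff_relations_of_subordinate {f u φ : ℂ → ℂ} {α : ℂ}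
    (hf : AnalyticOn ℂ f (ball 0 1)) (hf0 : f 0 = 0) (hf1 : deriv f 0 = 1)
    (hu : AnalyticOn ℂ u (ball 0 1)) (hu0 : u 0 = 0)
    (hφ : AnalyticOn ℂ φ (ball 0 1)) (hφ0 : φ 0 = 1)
    (hfu : ∀ z ∈ ball (0 : ℂ) 1, z ≠ 0 →
      z * deriv f z / f z + α * z ^ 2 * iteratedDeriv 2 f z / f z = φ (u z)) :
    (1 + 2 * α) * iteratedDeriv 2 f 0 = 2 * deriv φ 0 * deriv u 0 ∧
    (2 + 6 * α) * iteratedDeriv 3 f 0 = 3 * iteratedDeriv 2 φ 0 * deriv u 0 ^ 2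
      + 3 * deriv φ 0 * iteratedDeriv 2 u 0
      + 3 * deriv φ 0 * deriv u 0 * iteratedDeriv 2 f 0 := by
  have h0 : ball (0 : ℂ) 1 ∈ 𝓝 0 := ball_mem_nhds 0 one_pos
  have hfa := hf.analyticAt h0
  have hdiv : ∀ᶠ z in 𝓝[≠] 0,
      (z * deriv f z + α * z ^ 2 * iteratedDeriv 2 f z) / f z = φ (u z) := by
    filter_upwards [nhdsWithin_le_nhds h0, self_mem_nhdsWithin] with z hz hz0
    rw [add_div]
    exact hfu z hz hz0
  have hmul := eventuallyEq_mul_of_eventually_div_eq (hf1 ▸ hfa.differentiableAt.hasDerivAt)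
    one_ne_zero hf0 (by simp) hdiv
  have := coeff_relations_of_eventuallyEq hfa (hu.analyticAt h0)
    (by rw [hu0]; exact hφ.analyticAt h0) hf0 hf1 (by rw [hu0, hφ0]) hmul
  rwa [hu0] at this

theorem norm_sub_lt_norm_one_sub_conj_mul {a w : ℂ} (ha : ‖a‖ < 1) (hw : ‖w‖ < 1) :
    ‖w - a‖ < ‖1 - conj a * w‖ := by
  have key : ‖1 - conj a * w‖ ^ 2 - ‖w - a‖ ^ 2 = (1 - ‖a‖ ^ 2) * (1 - ‖w‖ ^ 2) := by
    simp only [Complex.sq_norm, normSq_apply, sub_re, sub_im, mul_re, mul_im, conj_re, conj_im,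
      one_re, one_im]
    ring
  have hpos : 0 < (1 - ‖a‖ ^ 2) * (1 - ‖w‖ ^ 2) := by
    apply mul_pos <;> nlinarith [norm_nonneg a, norm_nonneg w]
  exact lt_of_pow_lt_pow_left₀ 2 (norm_nonneg _) (by linarith)

theorem norm_deriv_le_one_sub_sq_of_mapsTo_ball {h : ℂ → ℂ}
    (hd : DifferentiableOn ℂ h (ball 0 1)) (hmap : MapsTo h (ball 0 1) (ball 0 1)) :
    ‖deriv h 0‖ ≤ 1 - ‖h 0‖ ^ 2 := by
  set a := h 0
  have ha : ‖a‖ < 1 := mem_ball_zero_iff.mp (hmap (mem_ball_self one_pos))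
  have hlt (z) (hz : z ∈ ball (0 : ℂ) 1) : ‖h z - a‖ < ‖1 - conj a * h z‖ :=
    norm_sub_lt_norm_one_sub_conj_mul ha (mem_ball_zero_iff.mp (hmap hz))
  have hden (z) (hz : z ∈ ball (0 : ℂ) 1) : 1 - conj a * h z ≠ 0 :=
    norm_pos_iff.mp ((norm_nonneg _).trans_lt (hlt z hz))
  set G := fun z => (h z - a) / (1 - conj a * h z)
  have hG : DifferentiableOn ℂ G (ball 0 1) :=
    (hd.sub_const a).div ((differentiableOn_const 1).sub (hd.const_mul _)) hden
  have hGmap : MapsTo G (ball 0 1) (closedBall (G 0) 1) := fun z hz => by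
    simpa [G, a, norm_div] using
      ((div_lt_one ((norm_nonneg _).trans_lt (hlt z hz))).mpr (hlt z hz)).le
  have hh : HasDerivAt h (deriv h 0) 0 :=
    (hd.differentiableAt (ball_mem_nhds 0 one_pos)).hasDerivAt
  have hconj : 1 - conj a * a = ((1 - ‖a‖ ^ 2 : ℝ) : ℂ) := by
    rw [mul_comm, mul_conj, normSq_eq_norm_sq]; push_cast; ring
  have hG' : deriv G 0 = deriv h 0 / ((1 - ‖a‖ ^ 2 : ℝ) : ℂ) := by
    have hne : ((1 - ‖a‖ ^ 2 : ℝ) : ℂ) ≠ 0 := hconj ▸ hden 0 (mem_ball_self one_pos)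
    have hGd := (hh.sub_const a).fun_div ((hh.const_mul (conj a)).const_sub 1)
      (hden 0 (mem_ball_self one_pos))
    rw [hGd.deriv, sub_self, zero_mul, sub_zero, hconj]
    field_simp
  have hpos : 0 < 1 - ‖a‖ ^ 2 := by nlinarith [norm_nonneg a]
  have := Complex.norm_deriv_le_one_of_mapsTo_ball hG hGmap one_pos
  rwa [hG', norm_div, norm_real, Real.norm_of_nonneg hpos.le, div_le_one hpos] at this

theorem norm_deriv_le_one_sub_sq_of_mapsTo_closedBall {h : ℂ → ℂ}
    (hd : DifferentiableOn ℂ h (ball 0 1)) (hmap : MapsTo h (ball 0 1) (closedBall 0 1)) :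
    ‖deriv h 0‖ ≤ 1 - ‖h 0‖ ^ 2 := by
  by_cases hint : MapsTo h (ball 0 1) (ball 0 1)
  · exact norm_deriv_le_one_sub_sq_of_mapsTo_ball hd hint
  -- otherwise `‖h‖` attains its maximum `1` inside the disc, so `h` is constant
  obtain ⟨z₀, hz₀, hz₀'⟩ : ∃ z₀ ∈ ball (0 : ℂ) 1, 1 ≤ ‖h z₀‖ := by
    simpa [MapsTo] using hint
  have hmax : IsMaxOn (norm ∘ h) (ball 0 1) z₀ := fun z hz =>
    (mem_closedBall_zero_iff.mp (hmap hz)).trans hz₀'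
  have hconst : EqOn h (fun _ => h z₀) (ball 0 1) :=
    Complex.eqOn_of_isPreconnected_of_isMaxOn_norm (convex_ball 0 1).isPreconnected isOpen_ball
      hd hz₀ hmax
  have hderiv : deriv h 0 = 0 := by
    rw [(eventuallyEq_of_mem (ball_mem_nhds 0 one_pos) hconst).deriv_eq, deriv_const]
  have hnorm : ‖h 0‖ = 1 :=
    le_antisymm (mem_closedBall_zero_iff.mp (hmap (mem_ball_self one_pos)))
      (hconst (mem_ball_self one_pos) ▸ hz₀')
  simp [hderiv, hnorm]

theorem norm_iteratedDeriv_two_le_of_mapsTo_ball {u : ℂ → ℂ}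
    (hd : DifferentiableOn ℂ u (ball 0 1)) (hmap : MapsTo u (ball 0 1) (ball 0 1))
    (hu0 : u 0 = 0) :
    ‖iteratedDeriv 2 u 0‖ ≤ 2 * (1 - ‖deriv u 0‖ ^ 2) := by
  set h := dslope u 0
  have hh : DifferentiableOn ℂ h (ball 0 1) :=
    (differentiableOn_dslope (ball_mem_nhds 0 one_pos)).mpr hd
  have hhmap : MapsTo h (ball 0 1) (closedBall 0 1) := fun z hz => by
    have hmap' : MapsTo u (ball 0 1) (closedBall (u 0) 1) := by
      rw [hu0]; exact hmap.mono_right ball_subset_closedBall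
    simpa using Complex.norm_dslope_le_div_of_mapsTo_ball hd hmap' hz
  have hu : u = fun z => z * h z := funext fun z => by
    simpa [hu0] using (sub_smul_dslope u 0 z).symm
  have h1 : deriv u 0 = h 0 := (dslope_same u 0).symm
  have h2 : iteratedDeriv 2 u 0 = 2 * deriv h 0 := by
    rw [hu, iteratedDeriv_fun_mul contDiffAt_fun_id
      ((hh.analyticAt (ball_mem_nhds 0 one_pos)).contDiffAt)]
    simp [iteratedDeriv_fun_id_zero]
  rw [h1, h2, norm_mul, Complex.norm_two]
  linarith [norm_deriv_le_one_sub_sq_of_mapsTo_closedBall hh hhmap]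

theorem sq_mul_eq_of_coeff_relations {K : Type*} [Field K] [CharZero K]
    {α B₁ B₂ A T c₁ c₂ d₁ d₂ : K} (hB₁ : B₁ ≠ 0)
    (hc₁ : (1 + 2 * α) * A = 2 * B₁ * c₁)
    (hc₂ : (2 + 6 * α) * T = 3 * (2 * B₂) * c₁ ^ 2 + 3 * B₁ * c₂ + 3 * B₁ * c₁ * A)
    (hd₁ : (1 + 2 * α) * -A = 2 * B₁ * d₁)
    (hd₂ : (2 + 6 * α) * (3 * A ^ 2 - T) =
      3 * (2 * B₂) * d₁ ^ 2 + 3 * B₁ * d₂ + 3 * B₁ * d₁ * -A) :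
    d₁ = -c₁ ∧ (B₁ ^ 2 * (1 + 4 * α) - B₂ * (1 + 2 * α) ^ 2) * A ^ 2 = B₁ ^ 3 * (c₂ + d₂) := by
  have hd₁c₁ : d₁ = -c₁ := by
    have : 2 * B₁ * (d₁ + c₁) = 0 := by linear_combination -hd₁ - hc₁
    linear_combination (mul_eq_zero.mp this).resolve_left (mul_ne_zero two_ne_zero hB₁)
  refine ⟨hd₁c₁, ?_⟩
  subst hd₁c₁
  linear_combination (B₁ ^ 2 / 3) * (hc₂ + hd₂)
    - (B₁ ^ 2 * A + B₂ * ((1 + 2 * α) * A + 2 * B₁ * c₁)) * hc₁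

theorem norm_sq_mul_abs_le_of_coeff_bounds {α B₁ B₂ : ℝ} {A c₁ c₂ d₂ : ℂ} (hα : 0 ≤ α)
    (hB₁ : 0 < B₁)
    (hc₁ : (1 + 2 * α) * A = 2 * B₁ * c₁)
    (hA : (B₁ ^ 2 * (1 + 4 * α) - B₂ * (1 + 2 * α) ^ 2) * A ^ 2 = B₁ ^ 3 * (c₂ + d₂))
    (hc₂ : ‖c₂‖ ≤ 2 * (1 - ‖c₁‖ ^ 2)) (hd₂ : ‖d₂‖ ≤ 2 * (1 - ‖c₁‖ ^ 2)) :
    ‖A‖ ^ 2 * |B₁ ^ 2 * (1 + 4 * α) + (B₁ - B₂) * (1 + 2 * α) ^ 2| ≤ 4 * B₁ ^ 3 := by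
  set K := B₁ ^ 2 * (1 + 4 * α) - B₂ * (1 + 2 * α) ^ 2
  have hc₁' : (1 + 2 * α) * ‖A‖ = 2 * B₁ * ‖c₁‖ := by
    have := congrArg norm hc₁
    rwa [show 1 + 2 * (α : ℂ) = ((1 + 2 * α : ℝ) : ℂ) by push_cast; ring,
      show 2 * (B₁ : ℂ) = ((2 * B₁ : ℝ) : ℂ) by push_cast; ring, norm_mul, norm_mul, norm_real,
      norm_real, Real.norm_of_nonneg (by linarith), Real.norm_of_nonneg (by linarith)] at this
  have hA' : |K| * ‖A‖ ^ 2 = B₁ ^ 3 * ‖c₂ + d₂‖ := by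
    have := congrArg norm hA
    rwa [show (B₁ : ℂ) ^ 2 * (1 + 4 * α) - B₂ * (1 + 2 * α) ^ 2 = (K : ℂ) by
        simp only [K]; push_cast; ring,
      norm_mul, norm_mul, norm_pow, norm_pow, norm_real, norm_real, Real.norm_eq_abs,
      Real.norm_of_nonneg hB₁.le] at this
  have hK : |K| * ‖A‖ ^ 2 ≤ B₁ ^ 3 * (4 - 4 * ‖c₁‖ ^ 2) := by
    rw [hA']
    gcongr
    linarith [norm_add_le c₂ d₂]
  have hc₁sq : B₁ ^ 3 * (4 * ‖c₁‖ ^ 2) = B₁ * (1 + 2 * α) ^ 2 * ‖A‖ ^ 2 := by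
    linear_combination (-B₁ * ((1 + 2 * α) * ‖A‖ + 2 * B₁ * ‖c₁‖)) * hc₁'
  have hD :
      |B₁ ^ 2 * (1 + 4 * α) + (B₁ - B₂) * (1 + 2 * α) ^ 2| ≤ |K| + B₁ * (1 + 2 * α) ^ 2 := by
    rw [show B₁ ^ 2 * (1 + 4 * α) + (B₁ - B₂) * (1 + 2 * α) ^ 2 = K + B₁ * (1 + 2 * α) ^ 2 by ring]
    exact (abs_add_le _ _).trans_eq (by rw [abs_of_nonneg (mul_nonneg hB₁.le (sq_nonneg _))])
  calc ‖A‖ ^ 2 * |B₁ ^ 2 * (1 + 4 * α) + (B₁ - B₂) * (1 + 2 * α) ^ 2|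
      ≤ ‖A‖ ^ 2 * (|K| + B₁ * (1 + 2 * α) ^ 2) := by gcongr
    _ ≤ 4 * B₁ ^ 3 := by linarith

theorem le_mul_sqrt_div_sqrt_of_sq_mul_le {x B D : ℝ} (hx : 0 ≤ x) (hB : 0 ≤ B) (hD : 0 < D)
    (h : x ^ 2 * D ≤ B ^ 3) : x ≤ B * √B / √D := by
  rw [le_div_iff₀ (Real.sqrt_pos.mpr hD), ← pow_le_pow_iff_left₀ (by positivity) (by positivity)
    two_ne_zero, mul_pow, mul_pow, Real.sq_sqrt hD.le, Real.sq_sqrt hB]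
  linarith

theorem stmt11_general (f g u v φ : ℂ → ℂ) (α B₁ B₂ : ℝ) (hα : 0 ≤ α)
    (hf : AnalyticOn ℂ f (ball (0:ℂ) 1))
    (hf0 : f 0 = 0) (hf1 : deriv f 0 = 1)
    (hg : AnalyticOn ℂ g (ball (0:ℂ) 1))
    (hinv : ∀ᶠ z in 𝓝 (0:ℂ), g (f z) = z)
    (hu : AnalyticOn ℂ u (ball (0:ℂ) 1)) (humap : ∀ z ∈ ball (0:ℂ) 1, u z ∈ ball (0:ℂ) 1) (hu0 : u 0 = 0)
    (hv : AnalyticOn ℂ v (ball (0:ℂ) 1)) (hvmap : ∀ w ∈ ball (0:ℂ) 1, v w ∈ ball (0:ℂ) 1) (hv0 : v 0 = 0)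
    (hφ : AnalyticOn ℂ φ (ball (0:ℂ) 1)) (hφ0 : φ 0 = 1)
    (hB₁ : tc φ 1 = (B₁ : ℂ)) (hB₂ : tc φ 2 = (B₂ : ℂ)) (hB₁pos : 0 < B₁)
    (hfu : ∀ z ∈ ball (0:ℂ) 1, z ≠ 0 →
      z * deriv f z / f z + (α : ℂ) * z ^ 2 * iteratedDeriv 2 f z / f z = φ (u z))
    (hgv : ∀ w ∈ ball (0:ℂ) 1, w ≠ 0 →
      w * deriv g w / g w + (α : ℂ) * w ^ 2 * iteratedDeriv 2 g w / g w = φ (v w))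
    (hne : B₁ ^ 2 * (1 + 4 * α) + (B₁ - B₂) * (1 + 2 * α) ^ 2 ≠ 0) :
    ‖tc f 2‖ ≤ B₁ * Real.sqrt B₁ /
      Real.sqrt |B₁ ^ 2 * (1 + 4 * α) + (B₁ - B₂) * (1 + 2 * α) ^ 2| := by
  have h0 : ball (0 : ℂ) 1 ∈ 𝓝 0 := ball_mem_nhds 0 one_pos
  have hφ1 : deriv φ 0 = B₁ := by simpa [tc] using hB₁
  have hφ2 : iteratedDeriv 2 φ 0 = 2 * B₂ := by
    simp only [tc, Nat.factorial_two, Nat.cast_ofNat] at hB₂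
    linear_combination 2 * hB₂
  have hg0 : g 0 = 0 := by simpa [hf0] using hinv.self_of_nhds
  obtain ⟨hg1, hg2, hg3⟩ := iteratedDeriv_of_eventually_comp_eq (hf.analyticAt h0).contDiffAt
    (by rw [hf0]; exact (hg.analyticAt h0).contDiffAt) hf1 hinv
  rw [hf0] at hg1 hg2 hg3
  obtain ⟨hc₁, hc₂⟩ := coeff_relations_of_subordinate hf hf0 hf1 hu hu0 hφ hφ0 hfu
  obtain ⟨hd₁, hd₂⟩ := coeff_relations_of_subordinate hg hg0 hg1 hv hv0 hφ hφ0 hgv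
  simp only [hφ1, hφ2, hg2, hg3] at hc₁ hc₂ hd₁ hd₂
  obtain ⟨hd₁c₁, hsum⟩ :=
    sq_mul_eq_of_coeff_relations (by exact_mod_cast hB₁pos.ne') hc₁ hc₂ hd₁ hd₂
  have hu2 := norm_iteratedDeriv_two_le_of_mapsTo_ball hu.differentiableOn humap hu0
  have hv2 := norm_iteratedDeriv_two_le_of_mapsTo_ball hv.differentiableOn hvmap hv0
  rw [hd₁c₁, norm_neg] at hv2
  have hbound := norm_sq_mul_abs_le_of_coeff_bounds hα hB₁pos hc₁ hsum hu2 hv2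
  have htc : ‖tc f 2‖ = ‖iteratedDeriv 2 f 0‖ / 2 := by simp [tc]
  rw [htc]
  exact le_mul_sqrt_div_sqrt_of_sq_mul_le (by positivity) hB₁pos.le (abs_pos.mpr hne)
    (by linarith)

theorem stmt11 (f g u v φ : ℂ → ℂ) (α B₁ B₂ : ℝ) (hα : 0 ≤ α)
    (hf : AnalyticOn ℂ f (ball (0:ℂ) 1)) (hfinj : Set.InjOn f (ball (0:ℂ) 1))
    (hf0 : f 0 = 0) (hf1 : deriv f 0 = 1)
    (hg : AnalyticOn ℂ g (ball (0:ℂ) 1)) (hginj : Set.InjOn g (ball (0:ℂ) 1))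
    (hinv : ∀ᶠ z in 𝓝 (0:ℂ), g (f z) = z)
    (hu : AnalyticOn ℂ u (ball (0:ℂ) 1)) (humap : ∀ z ∈ ball (0:ℂ) 1, u z ∈ ball (0:ℂ) 1) (hu0 : u 0 = 0)
    (hv : AnalyticOn ℂ v (ball (0:ℂ) 1)) (hvmap : ∀ w ∈ ball (0:ℂ) 1, v w ∈ ball (0:ℂ) 1) (hv0 : v 0 = 0)
    (hφ : AnalyticOn ℂ φ (ball (0:ℂ) 1)) (hφ0 : φ 0 = 1)
    (hB₁ : tc φ 1 = (B₁ : ℂ)) (hB₂ : tc φ 2 = (B₂ : ℂ)) (hB₁pos : 0 < B₁)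
    (hfu : ∀ z ∈ ball (0:ℂ) 1, z ≠ 0 →
      z * deriv f z / f z + (α : ℂ) * z ^ 2 * iteratedDeriv 2 f z / f z = φ (u z))
    (hgv : ∀ w ∈ ball (0:ℂ) 1, w ≠ 0 →
      w * deriv g w / g w + (α : ℂ) * w ^ 2 * iteratedDeriv 2 g w / g w = φ (v w))
    (hne : B₁ ^ 2 * (1 + 4 * α) + (B₁ - B₂) * (1 + 2 * α) ^ 2 ≠ 0) :
    ‖tc f 2‖ ≤ B₁ * Real.sqrt B₁ /
      Real.sqrt |B₁ ^ 2 * (1 + 4 * α) + (B₁ - B₂) * (1 + 2 * α) ^ 2| :=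
  stmt11_general f g u v φ α B₁ B₂ hα hf hf0 hf1 hg hinv hu humap hu0 hv hvmap hv0 hφ hφ0 hB₁ hB₂
    hB₁pos hfu hgv hne
end

section
/- If f is bi-univalent on 𝔻 with zf'(z)/f(z) ≺ φ(z) and wg'(w)/g(w) ≺ φ(w) for g=f⁻¹, where φ(z)=1+B₁z+B₂z²+⋯ with B₁>0 and B₁²+B₁−B₂≠0, then |a₂| ≤ B₁√B₁/√|B₁²+B₁−B₂| and |a₃| ≤ B₁+|B₂−B₁|. -/
/-!
Write `f = z + a₂ z² + a₃ z³ + ⋯`. Comparing Taylor coefficients in `g ∘ f = id` gives the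
coefficients `-a₂` and `2 a₂² - a₃` of `g`, and comparing them in `z f' = (φ ∘ u) f` and
`w g' = (φ ∘ v) g` expresses `a₂`, `a₃` through `B₁`, `B₂` and the coefficients `c₁, c₂` of `u`
and `d₁, d₂` of `v`; in particular `d₁ = -c₁`. Adding the second-order relations of `f` and `g`
eliminates `a₃` and gives `2 (B₁² - B₂) c₁² = B₁ (c₂ + d₂)`, which the Schwarz–Pick bound
`|c₂| ≤ 1 - |c₁|²` turns into the bound on `|a₂| = B₁ |c₁|`; the bound on `a₃` comes from
`4 a₃ = 4 B₂ c₁² + 3 B₁ c₂ + B₁ d₂` in the same way.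
-/

open Metric Complex Filter Topology

open ComplexConjugate

lemma tc_one (f : ℂ → ℂ) : tc f 1 = deriv f 0 := by
  simp [tc]

lemma iteratedDeriv_succ_id_mul_zero {𝕜 : Type*} [NontriviallyNormedField 𝕜] {h : 𝕜 → 𝕜}
    {n : ℕ} (hh : ContDiffAt 𝕜 (n + 1) h 0) :
    iteratedDeriv (n + 1) (fun z => z * h z) 0 = (n + 1) * iteratedDeriv n h 0 := by
  rw [iteratedDeriv_fun_mul contDiffAt_fun_id hh, Finset.sum_range_succ', Finset.sum_range_succ']
  simp [iteratedDeriv_fun_id_zero]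

lemma tc_of_eventually_leftInverse {f g : ℂ → ℂ} (hf : ContDiffAt ℂ 3 f 0)
    (hg : ContDiffAt ℂ 3 g 0) (hf0 : f 0 = 0) (hf1 : deriv f 0 = 1)
    (hinv : ∀ᶠ z in 𝓝 0, g (f z) = z) :
    g 0 = 0 ∧ deriv g 0 = 1 ∧ tc g 2 = -tc f 2 ∧ tc g 3 = 2 * tc f 2 ^ 2 - tc f 3 := by
  rw [← hf0] at hg
  have hcomp : g ∘ f =ᶠ[𝓝 0] id := hinv
  have h1 := deriv_comp (0 : ℂ) (hg.differentiableAt (by norm_num))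
    (hf.differentiableAt (by norm_num))
  have h2 := iteratedDeriv_comp_two (hg.of_le (by norm_num)) (hf.of_le (by norm_num))
  have h3 := iteratedDeriv_comp_three hg hf
  rw [hcomp.deriv_eq] at h1
  rw [hcomp.iteratedDeriv_eq] at h2 h3
  simp only [iteratedDeriv_id, hf0, hf1] at h1 h2 h3
  norm_num at h1 h2 h3
  rw [← h1, one_mul] at h2 h3
  refine ⟨by simpa [hf0] using hinv.self_of_nhds, h1.symm, ?_, ?_⟩ <;>
    simp only [tc] <;> norm_num [Nat.factorial]
  · linear_combination -h2 / 2
  · linear_combination -h3 / 6 + iteratedDeriv 2 f 0 / 2 * h2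

lemma tc_of_mul_deriv_eq_mul {F P : ℂ → ℂ} (hF : AnalyticAt ℂ F 0) (hP : AnalyticAt ℂ P 0)
    (hF0 : F 0 = 0) (hF1 : deriv F 0 = 1)
    (heq : ∀ᶠ z in 𝓝 0, z * deriv F z = P z * F z) :
    tc P 1 = tc F 2 ∧ tc P 2 = 2 * tc F 3 - tc F 2 ^ 2 := by
  have leibniz (n : ℕ) : (n + 1 : ℂ) * iteratedDeriv (n + 1) F 0 =
      ∑ i ∈ Finset.range (n + 2),
        ((n + 1).choose i : ℂ) * iteratedDeriv i P 0 * iteratedDeriv (n + 1 - i) F 0 := by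
    rw [← iteratedDeriv_fun_mul hP.contDiffAt hF.contDiffAt,
      ← EventuallyEq.iteratedDeriv_eq _ heq,
      iteratedDeriv_succ_id_mul_zero hF.deriv.contDiffAt, iteratedDeriv_succ']
  have h1 := leibniz 0
  have h2 := leibniz 1
  have h3 := leibniz 2
  simp only [CharP.cast_eq_zero, zero_add, iteratedDeriv_one, hF1, mul_one, Finset.sum_range_succ,
    Finset.range_one, Finset.sum_singleton, Nat.choose_succ_self_right, Nat.cast_one,
    iteratedDeriv_zero, one_mul, tsub_zero, Nat.choose_self, tsub_self, hF0, mul_zero, add_zero,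
    Nat.reduceAdd, Nat.choose_zero_right, Nat.cast_ofNat, Nat.add_one_sub_one,
    Nat.choose_one_right, Nat.reduceSub] at h1 h2 h3
  rw [← h1] at h2 h3
  simp only [tc]
  norm_num [Nat.factorial]
  constructor
  · linear_combination -h2 / 2
  · linear_combination -h3 / 6 + iteratedDeriv 2 F 0 / 4 * h2

lemma eventually_mul_deriv_eq_of_div {𝕜 : Type*} [NontriviallyNormedField 𝕜] {F Q : 𝕜 → 𝕜}
    {s : Set 𝕜} (hs : s ∈ 𝓝 0)
    (hinj : Set.InjOn F s) (hF0 : F 0 = 0)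
    (h : ∀ z ∈ s, z ≠ 0 → z * deriv F z / F z = Q z) :
    ∀ᶠ z in 𝓝 0, z * deriv F z = Q z * F z := by
  filter_upwards [hs] with z hz
  rcases eq_or_ne z 0 with rfl | hz0
  · simp [hF0]
  · have hFz : F z ≠ 0 := fun h0 => hz0 (hinj hz (mem_of_mem_nhds hs) (h0.trans hF0.symm))
    rw [← h z hz hz0, div_mul_cancel₀ _ hFz]

lemma tc_comp_of_map_zero {φ u : ℂ → ℂ} (hφ : ContDiffAt ℂ 2 φ 0) (hu : ContDiffAt ℂ 2 u 0)
    (hu0 : u 0 = 0) :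
    tc (φ ∘ u) 1 = tc φ 1 * tc u 1 ∧ tc (φ ∘ u) 2 = tc φ 2 * tc u 1 ^ 2 + tc φ 1 * tc u 2 := by
  rw [← hu0] at hφ
  have h1 := deriv_comp (0 : ℂ) (hφ.differentiableAt (by norm_num))
    (hu.differentiableAt (by norm_num))
  have h2 := iteratedDeriv_comp_two hφ hu
  refine ⟨by rw [tc_one, tc_one, tc_one, h1, hu0], ?_⟩
  simp only [tc, h2, hu0]
  norm_num [Nat.factorial]
  ring

lemma norm_sub_le_norm_one_sub_conj_mul {a ζ : ℂ} (ha : ‖a‖ ≤ 1) (hζ : ‖ζ‖ ≤ 1) :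
    ‖ζ - a‖ ≤ ‖1 - conj a * ζ‖ := by
  have key : ‖1 - conj a * ζ‖ ^ 2 - ‖ζ - a‖ ^ 2 = (1 - ‖a‖ ^ 2) * (1 - ‖ζ‖ ^ 2) := by
    simp only [Complex.sq_norm, Complex.normSq_apply, Complex.sub_re, Complex.sub_im,
      Complex.mul_re, Complex.mul_im, Complex.one_re, Complex.one_im, Complex.conj_re,
      Complex.conj_im]
    ring
  have hnn : 0 ≤ (1 - ‖a‖ ^ 2) * (1 - ‖ζ‖ ^ 2) :=
    mul_nonneg (by nlinarith [norm_nonneg a]) (by nlinarith [norm_nonneg ζ])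
  exact le_of_sq_le_sq (by linarith) (norm_nonneg _)

/-- Schwarz's lemma applied to `w` followed by the disc automorphism sending `w 0` to `0`. -/
lemma norm_deriv_le_one_sub_norm_sq_of_norm_lt_one {w : ℂ → ℂ}
    (hw : DifferentiableOn ℂ w (ball 0 1)) (hmaps : Set.MapsTo w (ball 0 1) (closedBall 0 1))
    (hw0 : ‖w 0‖ < 1) : ‖deriv w 0‖ ≤ 1 - ‖w 0‖ ^ 2 := by
  have hball : ball (0 : ℂ) 1 ∈ 𝓝 0 := ball_mem_nhds 0 one_pos
  have hwle : ∀ z ∈ ball (0 : ℂ) 1, ‖w z‖ ≤ 1 := fun z hz => by simpa using hmaps hz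
  have hden : ∀ z ∈ ball (0 : ℂ) 1, 1 - conj (w 0) * w z ≠ 0 := by
    intro z hz
    refine sub_ne_zero.2 fun h => ?_
    have : ‖conj (w 0) * w z‖ < 1 := by
      rw [norm_mul, RCLike.norm_conj]
      nlinarith [hwle z hz, norm_nonneg (w 0), norm_nonneg (w z)]
    rw [← h, norm_one] at this
    exact this.false
  set h : ℂ → ℂ := fun z => (w z - w 0) / (1 - conj (w 0) * w z)
  have hdiff : DifferentiableOn ℂ h (ball 0 1) :=
    (hw.sub_const _).div ((differentiableOn_const 1).sub (hw.const_mul _)) hden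
  have hmaps' : Set.MapsTo h (ball 0 1) (closedBall (h 0) 1) := by
    intro z hz
    simp only [h, mem_closedBall, dist_eq_norm, sub_self, zero_div, sub_zero, norm_div]
    exact div_le_one_of_le₀ (norm_sub_le_norm_one_sub_conj_mul hw0.le (hwle z hz))
      (norm_nonneg _)
  have hpos : 0 < 1 - ‖w 0‖ ^ 2 := by nlinarith [norm_nonneg (w 0)]
  have hderiv : deriv h 0 = deriv w 0 / ((1 - ‖w 0‖ ^ 2 : ℝ) : ℂ) := by
    have hd := (hw.differentiableAt hball).hasDerivAt
    have hden0 := hden 0 (mem_of_mem_nhds hball)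
    rw [((hd.sub_const _).fun_div ((hd.const_mul _).const_sub 1) hden0).deriv, sub_self,
      conj_mul']
    rw [conj_mul'] at hden0
    push_cast
    field_simp
    ring
  have hschwarz := Complex.norm_deriv_le_one_of_mapsTo_ball hdiff hmaps' one_pos
  rwa [hderiv, norm_div, Complex.norm_real, Real.norm_of_nonneg hpos.le, div_le_one hpos]
    at hschwarz

lemma norm_deriv_le_one_sub_norm_sq {w : ℂ → ℂ} (hw : DifferentiableOn ℂ w (ball 0 1))
    (hmaps : Set.MapsTo w (ball 0 1) (closedBall 0 1)) : ‖deriv w 0‖ ≤ 1 - ‖w 0‖ ^ 2 := by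
  have hball : ball (0 : ℂ) 1 ∈ 𝓝 0 := ball_mem_nhds 0 one_pos
  have hwle : ∀ z ∈ ball (0 : ℂ) 1, ‖w z‖ ≤ 1 := fun z hz => by simpa using hmaps hz
  rcases (hwle 0 (mem_of_mem_nhds hball)).eq_or_lt with hw0 | hw0
  · have hmax : IsLocalMax (norm ∘ w) 0 := by
      filter_upwards [hball] with z hz
      exact (hwle z hz).trans hw0.ge
    have hconst : w =ᶠ[𝓝 0] fun _ => w 0 :=
      Complex.eventually_eq_of_isLocalMax_norm (hw.eventually_differentiableAt hball) hmax
    rw [hconst.deriv_eq, deriv_const, hw0]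
    simp
  · exact norm_deriv_le_one_sub_norm_sq_of_norm_lt_one hw hmaps hw0

lemma norm_tc_two_le_of_mapsTo {u : ℂ → ℂ} (hu : DifferentiableOn ℂ u (ball 0 1))
    (hmaps : Set.MapsTo u (ball 0 1) (closedBall 0 1)) (hu0 : u 0 = 0) :
    ‖tc u 2‖ ≤ 1 - ‖tc u 1‖ ^ 2 := by
  have hball : ball (0 : ℂ) 1 ∈ 𝓝 0 := ball_mem_nhds 0 one_pos
  set w := dslope u 0
  have hw : DifferentiableOn ℂ w (ball 0 1) := (differentiableOn_dslope hball).2 hu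
  have hwmaps : Set.MapsTo w (ball 0 1) (closedBall 0 1) := by
    intro z hz
    simpa using Complex.norm_dslope_le_div_of_mapsTo_ball hu (R₂ := 1) (by rwa [hu0]) hz
  have hu_eq : u = fun z => z * w z := by
    funext z
    simpa [hu0] using (sub_smul_dslope u 0 z).symm
  have h1 : tc u 1 = w 0 := by
    rw [tc_one]
    exact (dslope_same u 0).symm
  have h2 : tc u 2 = deriv w 0 := by
    have := iteratedDeriv_succ_id_mul_zero (n := 1) (hw.analyticAt hball).contDiffAt
    rw [← hu_eq] at this
    simp only [tc, this, Nat.cast_one, iteratedDeriv_one, Nat.factorial_two, Nat.cast_ofNat]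
    ring
  rw [h1, h2]
  exact norm_deriv_le_one_sub_norm_sq hw hwmaps

section CoefficientBounds

variable {B₁ B₂ : ℝ} {a₂ a₃ c₁ c₂ d₁ d₂ : ℂ}

lemma coeff_identities_of_bi_subordinate (hB₁ : B₁ ≠ 0)
    (e₁ : B₁ * c₁ = a₂) (e₂ : B₂ * c₁ ^ 2 + B₁ * c₂ = 2 * a₃ - a₂ ^ 2)
    (e₃ : B₁ * d₁ = -a₂) (e₄ : B₂ * d₁ ^ 2 + B₁ * d₂ = 2 * (2 * a₂ ^ 2 - a₃) - (-a₂) ^ 2) :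
    d₁ = -c₁ ∧ 2 * (B₁ ^ 2 - B₂ : ℝ) * c₁ ^ 2 = B₁ * (c₂ + d₂) ∧
      4 * a₃ = 4 * B₂ * c₁ ^ 2 + 3 * B₁ * c₂ + B₁ * d₂ := by
  have hd₁ : d₁ = -c₁ := mul_left_cancel₀ (ofReal_ne_zero.2 hB₁) (by linear_combination e₃ + e₁)
  subst hd₁
  refine ⟨rfl, ?_, ?_⟩
  · push_cast
    linear_combination -(e₂ + e₄) + 2 * (B₁ * c₁ + a₂) * e₁
  · linear_combination -(3 * e₂ + e₄)

lemma norm_second_coeff_le (hB₁ : 0 < B₁) (hne : B₁ ^ 2 + B₁ - B₂ ≠ 0)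
    (e₁ : B₁ * c₁ = a₂) (e₂ : B₂ * c₁ ^ 2 + B₁ * c₂ = 2 * a₃ - a₂ ^ 2)
    (e₃ : B₁ * d₁ = -a₂) (e₄ : B₂ * d₁ ^ 2 + B₁ * d₂ = 2 * (2 * a₂ ^ 2 - a₃) - (-a₂) ^ 2)
    (hc : ‖c₂‖ ≤ 1 - ‖c₁‖ ^ 2) (hd : ‖d₂‖ ≤ 1 - ‖d₁‖ ^ 2) :
    ‖a₂‖ ≤ B₁ * Real.sqrt B₁ / Real.sqrt |B₁ ^ 2 + B₁ - B₂| := by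
  obtain ⟨rfl, hsum, -⟩ := coeff_identities_of_bi_subordinate hB₁.ne' e₁ e₂ e₃ e₄
  rw [norm_neg] at hd
  have hC : 0 < |B₁ ^ 2 + B₁ - B₂| := abs_pos.2 hne
  have hsum_norm : 2 * |B₁ ^ 2 - B₂| * ‖c₁‖ ^ 2 ≤ B₁ * (2 * (1 - ‖c₁‖ ^ 2)) := by
    have := congrArg norm hsum
    simp only [norm_mul, norm_pow, norm_real, Real.norm_eq_abs, Complex.norm_ofNat,
      abs_of_pos hB₁] at this
    rw [this]
    gcongr
    linarith [norm_add_le c₂ d₂]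
  have htri : |B₁ ^ 2 + B₁ - B₂| ≤ |B₁ ^ 2 - B₂| + B₁ := by
    simpa [abs_of_pos hB₁, add_sub_right_comm] using abs_add_le (B₁ ^ 2 - B₂) B₁
  have hX : ‖c₁‖ ^ 2 ≤ B₁ / |B₁ ^ 2 + B₁ - B₂| := by
    rw [le_div_iff₀ hC]
    nlinarith [sq_nonneg ‖c₁‖]
  calc ‖a₂‖ = B₁ * ‖c₁‖ := by rw [← e₁, norm_mul, norm_real, Real.norm_of_nonneg hB₁.le]
    _ ≤ B₁ * Real.sqrt (B₁ / |B₁ ^ 2 + B₁ - B₂|) := by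
        gcongr
        exact Real.le_sqrt_of_sq_le hX
    _ = B₁ * Real.sqrt B₁ / Real.sqrt |B₁ ^ 2 + B₁ - B₂| := by
        rw [Real.sqrt_div' _ hC.le, mul_div_assoc]

lemma norm_third_coeff_le (hB₁ : 0 < B₁)
    (e₁ : B₁ * c₁ = a₂) (e₂ : B₂ * c₁ ^ 2 + B₁ * c₂ = 2 * a₃ - a₂ ^ 2)
    (e₃ : B₁ * d₁ = -a₂) (e₄ : B₂ * d₁ ^ 2 + B₁ * d₂ = 2 * (2 * a₂ ^ 2 - a₃) - (-a₂) ^ 2)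
    (hc : ‖c₂‖ ≤ 1 - ‖c₁‖ ^ 2) (hd : ‖d₂‖ ≤ 1 - ‖d₁‖ ^ 2) :
    ‖a₃‖ ≤ B₁ + |B₂ - B₁| := by
  obtain ⟨rfl, -, ha₃⟩ := coeff_identities_of_bi_subordinate hB₁.ne' e₁ e₂ e₃ e₄
  rw [norm_neg] at hd
  have hX : ‖c₁‖ ^ 2 ≤ 1 := by linarith [norm_nonneg c₂]
  have h4 : 4 * ‖a₃‖ ≤ 4 * |B₂| * ‖c₁‖ ^ 2 + 3 * B₁ * ‖c₂‖ + B₁ * ‖d₂‖ :=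
    calc 4 * ‖a₃‖ = ‖4 * (B₂ : ℂ) * c₁ ^ 2 + 3 * B₁ * c₂ + B₁ * d₂‖ := by
          rw [← ha₃, norm_mul, Complex.norm_ofNat]
      _ ≤ ‖4 * (B₂ : ℂ) * c₁ ^ 2‖ + ‖3 * (B₁ : ℂ) * c₂‖ + ‖(B₁ : ℂ) * d₂‖ := norm_add₃_le
      _ = 4 * |B₂| * ‖c₁‖ ^ 2 + 3 * B₁ * ‖c₂‖ + B₁ * ‖d₂‖ := by simp [abs_of_pos hB₁]
  have htri : |B₂| - B₁ ≤ |B₂ - B₁| := by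
    simpa [abs_of_pos hB₁] using abs_sub_abs_le_abs_sub B₂ B₁
  nlinarith [mul_le_mul_of_nonneg_left hc hB₁.le, mul_le_mul_of_nonneg_left hd hB₁.le,
    mul_le_mul_of_nonneg_right htri (sq_nonneg ‖c₁‖),
    mul_le_mul_of_nonneg_left hX (abs_nonneg (B₂ - B₁))]

end CoefficientBounds

theorem stmt13_general (f g u v φ : ℂ → ℂ) (B₁ B₂ : ℝ)
    (hf : AnalyticOn ℂ f (ball (0:ℂ) 1)) (hfinj : Set.InjOn f (ball (0:ℂ) 1))
    (hf0 : f 0 = 0) (hf1 : deriv f 0 = 1)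
    (hg : AnalyticOn ℂ g (ball (0:ℂ) 1)) (hginj : Set.InjOn g (ball (0:ℂ) 1))
    (hinv : ∀ᶠ z in 𝓝 (0:ℂ), g (f z) = z)
    (hu : AnalyticOn ℂ u (ball (0:ℂ) 1)) (humap : ∀ z ∈ ball (0:ℂ) 1, u z ∈ ball (0:ℂ) 1) (hu0 : u 0 = 0)
    (hv : AnalyticOn ℂ v (ball (0:ℂ) 1)) (hvmap : ∀ w ∈ ball (0:ℂ) 1, v w ∈ ball (0:ℂ) 1) (hv0 : v 0 = 0)
    (hφ : AnalyticOn ℂ φ (ball (0:ℂ) 1))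
    (hB₁ : tc φ 1 = (B₁ : ℂ)) (hB₂ : tc φ 2 = (B₂ : ℂ)) (hB₁pos : 0 < B₁)
    (hfu : ∀ z ∈ ball (0:ℂ) 1, z ≠ 0 → z * deriv f z / f z = φ (u z))
    (hgv : ∀ w ∈ ball (0:ℂ) 1, w ≠ 0 → w * deriv g w / g w = φ (v w))
    (hne : B₁ ^ 2 + B₁ - B₂ ≠ 0) :
    ‖tc f 2‖ ≤ B₁ * Real.sqrt B₁ / Real.sqrt |B₁ ^ 2 + B₁ - B₂| ∧
    ‖tc f 3‖ ≤ B₁ + |B₂ - B₁| := by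
  have hball : ball (0 : ℂ) 1 ∈ 𝓝 0 := ball_mem_nhds 0 one_pos
  have hf' := hf.analyticAt hball
  have hg' := hg.analyticAt hball
  have hφ' := hφ.analyticAt hball
  obtain ⟨hg0, hg1, hg2, hg3⟩ :=
    tc_of_eventually_leftInverse hf'.contDiffAt hg'.contDiffAt hf0 hf1 hinv
  obtain ⟨hp1, hp2⟩ := tc_of_mul_deriv_eq_mul (P := φ ∘ u) hf'
    (hφ'.comp_of_eq (hu.analyticAt hball) hu0) hf0 hf1
    (eventually_mul_deriv_eq_of_div hball hfinj hf0 hfu)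
  obtain ⟨hq1, hq2⟩ := tc_of_mul_deriv_eq_mul (P := φ ∘ v) hg'
    (hφ'.comp_of_eq (hv.analyticAt hball) hv0) hg0 hg1
    (eventually_mul_deriv_eq_of_div hball hginj hg0 hgv)
  obtain ⟨hu1, hu2⟩ := tc_comp_of_map_zero hφ'.contDiffAt (hu.analyticAt hball).contDiffAt hu0
  obtain ⟨hv1, hv2⟩ := tc_comp_of_map_zero hφ'.contDiffAt (hv.analyticAt hball).contDiffAt hv0
  have hc := norm_tc_two_le_of_mapsTo hu.differentiableOn
    (fun z hz => ball_subset_closedBall (humap z hz)) hu0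
  have hd := norm_tc_two_le_of_mapsTo hv.differentiableOn
    (fun z hz => ball_subset_closedBall (hvmap z hz)) hv0
  have e₁ : (B₁ : ℂ) * tc u 1 = tc f 2 := by rw [← hB₁, ← hu1, hp1]
  have e₂ : (B₂ : ℂ) * tc u 1 ^ 2 + B₁ * tc u 2 = 2 * tc f 3 - tc f 2 ^ 2 := by
    rw [← hB₁, ← hB₂, ← hu2, hp2]
  have e₃ : (B₁ : ℂ) * tc v 1 = -tc f 2 := by rw [← hB₁, ← hv1, hq1, hg2]
  have e₄ : (B₂ : ℂ) * tc v 1 ^ 2 + B₁ * tc v 2 =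
      2 * (2 * tc f 2 ^ 2 - tc f 3) - (-tc f 2) ^ 2 := by
    rw [← hB₁, ← hB₂, ← hv2, hq2, hg2, hg3]
  exact ⟨norm_second_coeff_le hB₁pos hne e₁ e₂ e₃ e₄ hc hd,
    norm_third_coeff_le hB₁pos e₁ e₂ e₃ e₄ hc hd⟩

theorem stmt13 (f g u v φ : ℂ → ℂ) (B₁ B₂ : ℝ)
    (hf : AnalyticOn ℂ f (ball (0:ℂ) 1)) (hfinj : Set.InjOn f (ball (0:ℂ) 1))
    (hf0 : f 0 = 0) (hf1 : deriv f 0 = 1)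
    (hg : AnalyticOn ℂ g (ball (0:ℂ) 1)) (hginj : Set.InjOn g (ball (0:ℂ) 1))
    (hinv : ∀ᶠ z in 𝓝 (0:ℂ), g (f z) = z)
    (hu : AnalyticOn ℂ u (ball (0:ℂ) 1)) (humap : ∀ z ∈ ball (0:ℂ) 1, u z ∈ ball (0:ℂ) 1) (hu0 : u 0 = 0)
    (hv : AnalyticOn ℂ v (ball (0:ℂ) 1)) (hvmap : ∀ w ∈ ball (0:ℂ) 1, v w ∈ ball (0:ℂ) 1) (hv0 : v 0 = 0)
    (hφ : AnalyticOn ℂ φ (ball (0:ℂ) 1)) (hφ0 : φ 0 = 1)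
    (hB₁ : tc φ 1 = (B₁ : ℂ)) (hB₂ : tc φ 2 = (B₂ : ℂ)) (hB₁pos : 0 < B₁)
    (hfu : ∀ z ∈ ball (0:ℂ) 1, z ≠ 0 → z * deriv f z / f z = φ (u z))
    (hgv : ∀ w ∈ ball (0:ℂ) 1, w ≠ 0 → w * deriv g w / g w = φ (v w))
    (hne : B₁ ^ 2 + B₁ - B₂ ≠ 0) :
    ‖tc f 2‖ ≤ B₁ * Real.sqrt B₁ / Real.sqrt |B₁ ^ 2 + B₁ - B₂| ∧
    ‖tc f 3‖ ≤ B₁ + |B₂ - B₁| :=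
  stmt13_general f g u v φ B₁ B₂ hf hfinj hf0 hf1 hg hginj hinv hu humap hu0 hv hvmap hv0 hφ hB₁ hB₂
    hB₁pos hfu hgv hne
end
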